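/- Let |ψ⟩ = (1/√2)(√(1−ε)|00⟩+√ε|11⟩)|0⟩ + (1/√2)(√ε|00⟩+√(1−ε)|11⟩)|1⟩ on ℂ²_C ⊗ ℂ²_P ⊗ ℂ²_{P'}, and let E_{0|0} = I_P ⊗ |0⟩⟨0|_{P'}. Then for every unitary U acting on the provider's systems P, P' together with appended ancillae |0̂⟩, and every unit vector |A⟩ on the provider's side, |⟨A|⟨00| U ((I_C⊗E_{0|0})|ψ⟩ ⊗ |0̂⟩) /‖(I_C⊗E_{0|0})|ψ⟩‖ |² ≤ 1 − ε; hence the trace distance to the target (1/√2)|A⟩|00⟩ after measurement is at least √ε for all isometries. -/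

import Mathlib

/-!
The overlap `⟨T, v⟩` only sees the branch `√((1 - ε)/2) w0` of `v` in which the client qubit is
`|0⟩`, so Cauchy–Schwarz bounds it by `√((1 - ε)/2)`, while `‖v‖² = 1/2`.

For unit vectors `x, y`, the Hermitian matrix `M = |x⟩⟨x| - |y⟩⟨y|` satisfies
`M³ = (1 - |⟨y, x⟩|²) M`, hence `|M| = M² / √(1 - |⟨y, x⟩|²)` and
`‖M‖₁ = 2 √(1 - |⟨y, x⟩|²)`. Applied to `x = √2 v` and `y = T`, the overlap bound turns into the
trace-distance bound.
-/

open Matrix Kronecker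
open scoped ComplexOrder

/-- The Schatten 1-norm (trace norm) of a complex matrix: `tr √(AᴴA)`. -/
noncomputable def traceNorm {n : Type*} [Fintype n] [DecidableEq n]
    (A : Matrix n n ℂ) : ℝ :=
  ((Matrix.posSemidef_conjTranspose_mul_self A).1.eigenvectorUnitary.1 *
    Matrix.diagonal (((↑) : ℝ → ℂ) ∘ (√·) ∘ (Matrix.posSemidef_conjTranspose_mul_self A).1.eigenvalues) *
    (star (Matrix.posSemidef_conjTranspose_mul_self A).1.eigenvectorUnitary : Matrix n n ℂ)).trace.re

/-- Package a plain function as a vector of the corresponding Euclidean space. -/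
noncomputable def toEuc {ι : Type*} (f : ι → ℂ) : EuclideanSpace ℂ ι :=
  (WithLp.equiv 2 (ι → ℂ)).symm f

/-- Partial trace over the second tensor factor. -/
noncomputable def ptrR {m p : Type*} [Fintype p] (M : Matrix (m × p) (m × p) ℂ) :
    Matrix m m ℂ :=
  Matrix.of fun i j => ∑ y, M (i, y) (j, y)

/-- Pauli-Z matrix. -/
noncomputable def tauz : Matrix (Fin 2) (Fin 2) ℂ := !![1, 0; 0, -1]

/-- Pauli-X matrix. -/
noncomputable def taux : Matrix (Fin 2) (Fin 2) ℂ := !![0, 1; 1, 0]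

open scoped MatrixOrder in
lemma traceNorm_eq_cfc {n : Type*} [Fintype n] [DecidableEq n] (A : Matrix n n ℂ) :
    traceNorm A = (CFC.sqrt (Aᴴ * A)).trace.re := by
  have hA := Matrix.posSemidef_conjTranspose_mul_self A
  rw [CFC.sqrt_eq_cfc, cfc_nnreal_eq_real _ (Aᴴ * A) hA.nonneg, hA.1.cfc_eq]
  have hsqrt_max : (fun x : ℝ => √(max x 0)) = fun x => √x := by
    funext x
    rcases le_total x 0 with h | h
    · simp [h, Real.sqrt_eq_zero'.mpr h]
    · simp [h]
  simp only [traceNorm, IsHermitian.cfc, Unitary.conjStarAlgAut_apply, Real.coe_sqrt,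
    Real.coe_toNNReal', hsqrt_max]
  rfl

open scoped MatrixOrder in
lemma traceNorm_eq_re_trace {n : Type*} [Fintype n] [DecidableEq n] {A B : Matrix n n ℂ}
    (hB : B.PosSemidef) (hBA : B * B = Aᴴ * A) : traceNorm A = B.trace.re := by
  rw [traceNorm_eq_cfc, CFC.sqrt_unique hBA hB.nonneg]

/-- `M² / √c` is the positive square root of `M² = Mᴴ M`; when `c = 0` the junk value
`(√0)⁻¹ = 0` still gives the right answer, because then `(M²)ᴴ M² = c M² = 0` forces `M² = 0`. -/
lemma traceNorm_eq_of_mul_self_mul_self {n : Type*} [Fintype n] [DecidableEq n]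
    {M : Matrix n n ℂ} (hM : M.IsHermitian) {c : ℝ} (hc : 0 ≤ c)
    (hcube : M * M * M = (c : ℂ) • M) : traceNorm M = (√c)⁻¹ * (M * M).trace.re := by
  have h4 : M * M * (M * M) = (c : ℂ) • (M * M) := by
    rw [← Matrix.mul_assoc, hcube, Matrix.smul_mul]
  have hsq : ((√c)⁻¹ : ℂ) • (M * M) * (((√c)⁻¹ : ℂ) • (M * M)) = Mᴴ * M := by
    rw [Matrix.smul_mul, Matrix.mul_smul, smul_smul, h4, smul_smul, hM.eq]
    rcases hc.eq_or_lt with rfl | hc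
    · have : (M * M)ᴴ * (M * M) = 0 := by
        rw [conjTranspose_mul, hM.eq, h4, Complex.ofReal_zero, zero_smul]
      rw [conjTranspose_mul_self_eq_zero.mp this, smul_zero]
    · have : (√c)⁻¹ * (√c)⁻¹ * c = 1 := by
        rw [← mul_inv, Real.mul_self_sqrt hc.le, inv_mul_cancel₀ hc.ne']
      rw [← Complex.ofReal_inv, ← Complex.ofReal_mul, ← Complex.ofReal_mul, this,
        Complex.ofReal_one, one_smul]
  have hpsd : (((√c)⁻¹ : ℂ) • (M * M)).PosSemidef := by
    refine PosSemidef.smul ?_ ?_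
    · simpa [hM.eq] using Matrix.posSemidef_conjTranspose_mul_self M
    · exact_mod_cast (inv_nonneg.mpr (Real.sqrt_nonneg c))
  rw [traceNorm_eq_re_trace hpsd hsq, trace_smul, smul_eq_mul, ← Complex.ofReal_inv,
    Complex.re_ofReal_mul]

section RankOne

variable {n : Type*}

def projDiff (x y : n → ℂ) : Matrix n n ℂ := vecMulVec x (star x) - vecMulVec y (star y)

lemma isHermitian_projDiff (x y : n → ℂ) : (projDiff x y).IsHermitian := by
  simp [projDiff, IsHermitian, conjTranspose_sub]

variable [Fintype n] {x y : n → ℂ}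

lemma dotProduct_star_comm (x y : n → ℂ) : star x ⬝ᵥ y = starRingEnd ℂ (star y ⬝ᵥ x) := by
  rw [← Complex.star_def, ← star_dotProduct_star, star_star]

lemma projDiff_mul_self_mul_self (hx : star x ⬝ᵥ x = 1) (hy : star y ⬝ᵥ y = 1) :
    projDiff x y * projDiff x y * projDiff x y =
      ((1 - ‖star y ⬝ᵥ x‖ ^ 2 : ℝ) : ℂ) • projDiff x y := by
  simp only [projDiff, sub_mul, mul_sub, vecMulVec_mul_vecMulVec, vecMulVec_smul, Matrix.smul_mul,
    smul_smul, hx, hy, dotProduct_star_comm x y, Complex.ofReal_sub, Complex.ofReal_one,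
    Complex.ofReal_pow, ← Complex.mul_conj']
  module

lemma trace_projDiff_mul_self (hx : star x ⬝ᵥ x = 1) (hy : star y ⬝ᵥ y = 1) :
    (projDiff x y * projDiff x y).trace = ((2 * (1 - ‖star y ⬝ᵥ x‖ ^ 2) : ℝ) : ℂ) := by
  simp only [projDiff, sub_mul, mul_sub, vecMulVec_mul_vecMulVec, vecMulVec_smul, trace_sub,
    trace_smul, trace_vecMulVec, smul_eq_mul, dotProduct_comm _ (star _), hx, hy,
    dotProduct_star_comm x y, Complex.ofReal_mul, Complex.ofReal_sub, Complex.ofReal_one,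
    Complex.ofReal_pow, Complex.ofReal_ofNat, ← Complex.mul_conj']
  ring

end RankOne

theorem traceNorm_vecMulVec_star_sub {n : Type*} [Fintype n] [DecidableEq n]
    {x y : EuclideanSpace ℂ n} (hx : ‖x‖ = 1) (hy : ‖y‖ = 1) :
    traceNorm (vecMulVec (x : n → ℂ) (star x) - vecMulVec y (star y)) =
      2 * √(1 - ‖inner ℂ y x‖ ^ 2) := by
  have hdot (z : EuclideanSpace ℂ n) (hz : ‖z‖ = 1) : star (z : n → ℂ) ⬝ᵥ z = 1 := by
    rw [dotProduct_comm, ← EuclideanSpace.inner_eq_star_dotProduct, inner_self_eq_norm_sq_to_K,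
      hz, RCLike.ofReal_one, one_pow]
  have hinner : inner ℂ y x = star (y : n → ℂ) ⬝ᵥ x := by
    rw [EuclideanSpace.inner_eq_star_dotProduct, dotProduct_comm]
  have hc : 0 ≤ 1 - ‖inner ℂ y x‖ ^ 2 := by
    have hCS := norm_inner_le_norm (𝕜 := ℂ) y x
    rw [hx, hy, one_mul] at hCS
    nlinarith [norm_nonneg (inner ℂ y x)]
  rw [hinner] at hc ⊢
  change traceNorm (projDiff _ _) = _
  rw [traceNorm_eq_of_mul_self_mul_self (isHermitian_projDiff _ _) hc
    (projDiff_mul_self_mul_self (hdot x hx) (hdot y hy)),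
    trace_projDiff_mul_self (hdot x hx) (hdot y hy), Complex.ofReal_re]
  linear_combination 2 * Real.div_sqrt (x := 1 - ‖star (y : n → ℂ) ⬝ᵥ x‖ ^ 2)

theorem traceNorm_two_smul_vecMulVec_star_sub {n : Type*} [Fintype n] [DecidableEq n]
    {v y : EuclideanSpace ℂ n} (hv : ‖v‖ ^ 2 = 1 / 2) (hy : ‖y‖ = 1) :
    traceNorm ((2 : ℂ) • vecMulVec (v : n → ℂ) (star v) - vecMulVec y (star y)) =
      2 * √(1 - 2 * ‖inner ℂ y v‖ ^ 2) := by
  have hx : ‖(√2 : ℂ) • v‖ = 1 := by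
    rw [← pow_eq_one_iff_of_nonneg (norm_nonneg _) two_ne_zero, norm_smul, mul_pow, hv]
    simp
  have hmat : (2 : ℂ) • vecMulVec (v : n → ℂ) (star v) =
      vecMulVec (((√2 : ℂ) • v : EuclideanSpace ℂ n) : n → ℂ) (star ((√2 : ℂ) • v)) := by
    simp only [WithLp.ofLp_smul, star_smul, smul_vecMulVec, vecMulVec_smul, smul_smul,
      Complex.star_def, Complex.conj_ofReal, ← Complex.ofReal_mul, Real.mul_self_sqrt zero_le_two]
    norm_num
  rw [hmat, traceNorm_vecMulVec_star_sub hx hy, inner_smul_right, norm_mul, mul_pow,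
    Complex.norm_real, Real.norm_eq_abs, sq_abs, Real.sq_sqrt zero_le_two]

section Stack

variable {ι : Type*} [Fintype ι]

/-- `stack f g = |0⟩ ⊗ f + |1⟩ ⊗ g`. -/
noncomputable def stack (f g : EuclideanSpace ℂ ι) : EuclideanSpace ℂ (Fin 2 × ι) :=
  toEuc fun p => if p.1 = 0 then f p.2 else g p.2

lemma inner_stack (f g f' g' : EuclideanSpace ℂ ι) :
    inner ℂ (stack f g) (stack f' g') = inner ℂ f f' + inner ℂ g g' := by
  simp [stack, toEuc, PiLp.inner_apply, Fintype.sum_prod_type, Fin.sum_univ_two]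

lemma norm_stack_sq (f g : EuclideanSpace ℂ ι) : ‖stack f g‖ ^ 2 = ‖f‖ ^ 2 + ‖g‖ ^ 2 := by
  simp [EuclideanSpace.norm_sq_eq, stack, toEuc, Fintype.sum_prod_type, Fin.sum_univ_two]

lemma norm_stack_zero (f : EuclideanSpace ℂ ι) : ‖stack f 0‖ = ‖f‖ := by
  rw [← pow_left_inj₀ (norm_nonneg _) (norm_nonneg _) two_ne_zero, norm_stack_sq, norm_zero]
  ring

lemma norm_inner_stack_zero_le (f g h : EuclideanSpace ℂ ι) :
    ‖inner ℂ (stack f 0) (stack g h)‖ ≤ ‖f‖ * ‖g‖ := by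
  rw [inner_stack, inner_zero_left, add_zero]
  exact norm_inner_le_norm f g

end Stack

/-- The unitary `U` enters only through the images `w0, w1` of the two orthonormal provider
vectors, and the provider's space after `U` is factorised as `ℂ² × ℂ^r`. -/
theorem stmt17 {r : ℕ} (ε : ℝ) (h0 : 0 ≤ ε) (h1 : ε ≤ 1/2)
    (w0 w1 : EuclideanSpace ℂ (Fin 2 × Fin r)) (hw : Orthonormal ℂ ![w0, w1])
    (A : EuclideanSpace ℂ (Fin r)) (hA : ‖A‖ = 1)
    (v : EuclideanSpace ℂ (Fin 2 × (Fin 2 × Fin r)))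
    (hv : v = toEuc (fun p =>
      (1/Real.sqrt 2 : ℂ) * (if p.1 = 0 then (Real.sqrt (1 - ε) : ℂ) * w0 p.2
        else (Real.sqrt ε : ℂ) * w1 p.2)))
    (T : EuclideanSpace ℂ (Fin 2 × (Fin 2 × Fin r)))
    (hT : T = toEuc (fun p => if p.1 = 0 ∧ p.2.1 = 0 then A p.2.2 else 0)) :
    (‖(inner ℂ T v : ℂ)‖) ^ 2 / ‖v‖ ^ 2 ≤ 1 - ε ∧
    (1/2) * traceNorm ((2 : ℂ) • Matrix.vecMulVec (fun p => v p) (fun p => star (v p)) -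
        Matrix.vecMulVec (fun p => T p) (fun p => star (T p))) ≥ Real.sqrt ε := by
  have hε1 : ε ≤ 1 := by linarith
  have hw0 : ‖w0‖ = 1 := by simpa using hw.1 0
  have hw1 : ‖w1‖ = 1 := by simpa using hw.1 1
  have hv_stack : v = ((√2)⁻¹ : ℂ) • stack ((√(1 - ε) : ℂ) • w0) ((√ε : ℂ) • w1) := by
    subst hv; ext p; simp [stack, toEuc]
  have hT_stack : T = stack (stack A 0) 0 := by
    subst hT; ext ⟨i, j, k⟩; simp [stack, toEuc]; split_ifs <;> simp_all
  have hvnorm : ‖v‖ ^ 2 = 1 / 2 := by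
    rw [hv_stack, norm_smul, mul_pow, norm_stack_sq, norm_smul, norm_smul, hw0, hw1]
    simp [hε1, h0]
  have hTnorm : ‖T‖ = 1 := by rw [hT_stack, norm_stack_zero, norm_stack_zero, hA]
  have hoverlap : ‖inner ℂ T v‖ ^ 2 ≤ (1 - ε) / 2 := by
    have hCS := norm_inner_stack_zero_le (stack A 0) ((√(1 - ε) : ℂ) • w0) ((√ε : ℂ) • w1)
    rw [norm_stack_zero, hA, one_mul, norm_smul, hw0, mul_one, Complex.norm_real,
      Real.norm_of_nonneg (Real.sqrt_nonneg _)] at hCS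
    rw [hT_stack, hv_stack, inner_smul_right, norm_mul, mul_pow]
    calc _ ≤ ‖((√2)⁻¹ : ℂ)‖ ^ 2 * √(1 - ε) ^ 2 := by gcongr
      _ = (1 - ε) / 2 := by simp [Real.sq_sqrt, hε1]; ring
  refine ⟨by rw [hvnorm, div_le_iff₀ (by norm_num)]; linarith, ?_⟩
  change 1 / 2 * traceNorm ((2 : ℂ) • vecMulVec (v : _ → ℂ) (star v) - vecMulVec T (star T)) ≥ _
  rw [traceNorm_two_smul_vecMulVec_star_sub hvnorm hTnorm]
  have hsqrt := Real.sqrt_le_sqrt (show ε ≤ 1 - 2 * ‖inner ℂ T v‖ ^ 2 by linarith)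
  linarith
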